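/- There exists a finite constant C (depending only on m and r̃_1,…,r̃_m) such that for all v ∈ [0,1], all 0 ≤ t < t' < ∞, and all x ∈ ℤ: |p_{t'}(x) − p_t(x)| ≤ C · min(1, t^{−1/2−v}) · (t'−t)^v. -/

import Mathlib

open Finset

/-- `φ(θ) := Σ_{k=1}^m r̃_k (1 − cos(kθ))`. -/
noncomputable def phiFn (m : ℕ) (r : ℕ → ℝ) (θ : ℝ) : ℝ :=
  ∑ k ∈ Finset.Icc 1 m, r k * (1 - Real.cos (k * θ))

/-- The semi-discrete heat kernel
`p_t(x) := (2π)⁻¹ ∫_{−π}^{π} e^{−ixθ} e^{−tφ(θ)} dθ`, a real number since `φ` is even. -/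
noncomputable def hk (m : ℕ) (r : ℕ → ℝ) (t : ℝ) (x : ℤ) : ℝ :=
  ((2 * (Real.pi : ℂ))⁻¹ * ∫ θ in (-Real.pi)..Real.pi,
      Complex.exp (-(x : ℂ) * Complex.I * (θ : ℂ)) *
        Complex.exp (-(t : ℂ) * ((phiFn m r θ : ℝ) : ℂ))).re

/-!
Since `|e^{-ixθ}| = 1`, the difference `p_{t'}(x) - p_t(x)` is bounded by
`∫_{-π}^{π} e^{-tφ} (1 - e^{-(t'-t)φ}) dθ`, and `1 - e^{-a} ≤ min 1 a ≤ a^v` turns this into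
`(t'-t)^v ∫ φ^v e^{-tφ}`. For `t ≤ 1` the last integral is bounded because `φ` is. For `t > 1`
write `φ^v e^{-tφ} = t^{-v} (tφ)^v e^{-tφ}` with `(tφ)^v e^{-tφ} ≤ 2 e^{-tφ/2}`; the bound
`φ(θ) ≥ (2 r̃_1 / π²) θ²` on `[-π, π]` then reduces the integral to a Gaussian one, of size
`t^{-1/2}`.
-/

open Real

namespace Real

lemma rpow_le_one_add {u v : ℝ} (hu : 0 ≤ u) (hv0 : 0 ≤ v) (hv1 : v ≤ 1) :
    u ^ v ≤ 1 + u := by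
  rcases le_total u 1 with h | h
  · linarith [rpow_le_one hu h hv0]
  · linarith [rpow_le_self_of_one_le h hv1]

lemma one_sub_exp_neg_le_rpow {a v : ℝ} (ha : 0 ≤ a) (hv0 : 0 ≤ v) (hv1 : v ≤ 1) :
    1 - exp (-a) ≤ a ^ v := by
  rcases le_total a 1 with h | h
  · linarith [add_one_le_exp (-a), self_le_rpow_of_le_one ha h hv1]
  · linarith [exp_pos (-a), one_le_rpow h hv0]

lemma rpow_mul_exp_neg_le {u v : ℝ} (hu : 0 ≤ u) (hv0 : 0 ≤ v) (hv1 : v ≤ 1) :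
    u ^ v * exp (-u) ≤ 2 * exp (-(u / 2)) := by
  have hexp : 1 + u ≤ 2 * exp (u / 2) := by linarith [add_one_le_exp (u / 2)]
  calc u ^ v * exp (-u) ≤ 2 * exp (u / 2) * exp (-u) := by
        gcongr; exact (rpow_le_one_add hu hv0 hv1).trans hexp
    _ = 2 * exp (-(u / 2)) := by rw [mul_assoc, ← exp_add]; ring_nf

lemma abs_exp_neg_mul_sub_le {a t t' v : ℝ} (ha : 0 ≤ a) (htt' : t ≤ t') (hv0 : 0 ≤ v)
    (hv1 : v ≤ 1) :
    |exp (-(t' * a)) - exp (-(t * a))| ≤ (t' - t) ^ v * (a ^ v * exp (-(t * a))) := by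
  have hδ : 0 ≤ t' - t := sub_nonneg.2 htt'
  have hsplit : exp (-(t' * a)) = exp (-(t * a)) * exp (-((t' - t) * a)) := by
    rw [← exp_add]; ring_nf
  have hgap : 0 ≤ 1 - exp (-((t' - t) * a)) := by
    linarith [exp_le_one_iff.2 (neg_nonpos.2 (mul_nonneg hδ ha))]
  rw [hsplit, abs_sub_comm, ← mul_one_sub, abs_of_nonneg (mul_nonneg (exp_pos _).le hgap)]
  calc exp (-(t * a)) * (1 - exp (-((t' - t) * a)))
      ≤ exp (-(t * a)) * ((t' - t) * a) ^ v := by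
        gcongr; exact one_sub_exp_neg_le_rpow (mul_nonneg hδ ha) hv0 hv1
    _ = (t' - t) ^ v * (a ^ v * exp (-(t * a))) := by rw [mul_rpow hδ ha]; ring

lemma rpow_mul_exp_neg_mul_le {a t v : ℝ} (ha : 0 ≤ a) (ht : 0 < t) (hv0 : 0 ≤ v)
    (hv1 : v ≤ 1) : a ^ v * exp (-(t * a)) ≤ 2 * t ^ (-v) * exp (-(t * a / 2)) := by
  have h := rpow_mul_exp_neg_le (mul_nonneg ht.le ha) hv0 hv1
  rw [mul_rpow ht.le ha, mul_assoc] at h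
  have htv : 0 < t ^ v := rpow_pos_of_pos ht v
  rw [rpow_neg ht.le, mul_comm 2, mul_assoc, ← div_eq_inv_mul, le_div_iff₀' htv]
  exact h

lemma integral_exp_neg_mul_sq_le {b : ℝ} (hb : 0 < b) :
    ∫ θ in (-π)..π, exp (-b * θ ^ 2) ≤ √(π / b) := by
  rw [intervalIntegral.integral_of_le (by linarith [pi_pos]), ← integral_gaussian]
  exact MeasureTheory.setIntegral_le_integral (integrable_exp_neg_mul_sq hb)
    (Filter.Eventually.of_forall fun _ => (exp_pos _).le)

end Real

section phiFn

variable {m : ℕ} {r : ℕ → ℝ}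

lemma continuous_phiFn : Continuous (phiFn m r) := by
  unfold phiFn; fun_prop

lemma phiFn_nonneg (hr : ∀ k ∈ Icc 1 m, 0 ≤ r k) (θ : ℝ) : 0 ≤ phiFn m r θ :=
  sum_nonneg fun k hk => mul_nonneg (hr k hk) (by linarith [cos_le_one (k * θ)])

lemma phiFn_le (hr : ∀ k ∈ Icc 1 m, 0 ≤ r k) (θ : ℝ) :
    phiFn m r θ ≤ ∑ k ∈ Icc 1 m, 2 * r k :=
  sum_le_sum fun k hk => by nlinarith [neg_one_le_cos (k * θ), hr k hk]

lemma mul_sq_le_phiFn (hm : 1 ≤ m) (hr : ∀ k ∈ Icc 1 m, 0 ≤ r k) {θ : ℝ}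
    (hθ : |θ| ≤ π) : 2 * r 1 / π ^ 2 * θ ^ 2 ≤ phiFn m r θ := by
  have hfirst : r 1 * (1 - cos θ) ≤ phiFn m r θ := by
    simpa [phiFn] using single_le_sum (f := fun k : ℕ => r k * (1 - cos (k * θ)))
      (fun k hk => mul_nonneg (hr k hk) (by linarith [cos_le_one (k * θ)]))
      (mem_Icc.2 ⟨le_rfl, hm⟩)
  have hcos := cos_le_one_sub_mul_cos_sq hθ
  have hr1 := hr 1 (mem_Icc.2 ⟨le_rfl, hm⟩)
  calc 2 * r 1 / π ^ 2 * θ ^ 2 = r 1 * (2 / π ^ 2 * θ ^ 2) := by ring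
    _ ≤ r 1 * (1 - cos θ) := by gcongr; linarith
    _ ≤ phiFn m r θ := hfirst

end phiFn

lemma abs_re_fourier_integral_le (x : ℤ) (g : ℝ → ℝ) :
    |((2 * (π : ℂ))⁻¹ * ∫ θ in (-π)..π,
        Complex.exp (-(x : ℂ) * Complex.I * θ) * (g θ : ℂ)).re| ≤
      ∫ θ in (-π)..π, |g θ| := by
  have hnorm : ∀ θ : ℝ,
      ‖Complex.exp (-(x : ℂ) * Complex.I * θ) * (g θ : ℂ)‖ = |g θ| := by
    intro θ
    rw [norm_mul, Complex.norm_exp, Complex.norm_real, Real.norm_eq_abs]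
    simp
  have hinv : ‖(2 * (π : ℂ))⁻¹‖ ≤ 1 := by
    rw [norm_inv, norm_mul, Complex.norm_ofNat, Complex.norm_real, norm_of_nonneg pi_pos.le]
    exact inv_le_one_of_one_le₀ (by linarith [pi_gt_three])
  calc _ ≤ ‖(2 * (π : ℂ))⁻¹ * ∫ θ in (-π)..π,
        Complex.exp (-(x : ℂ) * Complex.I * θ) * (g θ : ℂ)‖ := Complex.abs_re_le_norm _
    _ ≤ 1 * ∫ θ in (-π)..π, |g θ| := by
      rw [norm_mul]
      gcongr
      simpa only [hnorm] using intervalIntegral.norm_integral_le_integral_norm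
        (f := fun θ : ℝ => Complex.exp (-(x : ℂ) * Complex.I * θ) * (g θ : ℂ))
        (by linarith [pi_pos])
    _ = ∫ θ in (-π)..π, |g θ| := one_mul _

lemma hk_sub_hk (m : ℕ) (r : ℕ → ℝ) (t t' : ℝ) (x : ℤ) :
    hk m r t' x - hk m r t x = ((2 * (π : ℂ))⁻¹ * ∫ θ in (-π)..π,
      Complex.exp (-(x : ℂ) * Complex.I * θ) *
        ((exp (-(t' * phiFn m r θ)) - exp (-(t * phiFn m r θ)) : ℝ) : ℂ)).re := by
  have hexp : ∀ s θ : ℝ, Complex.exp (-(s : ℂ) * (phiFn m r θ : ℂ)) =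
      (exp (-(s * phiFn m r θ)) : ℂ) := by
    intro s θ; push_cast; ring_nf
  have hint : ∀ s : ℝ, IntervalIntegrable (fun θ : ℝ =>
      Complex.exp (-(x : ℂ) * Complex.I * θ) * (exp (-(s * phiFn m r θ)) : ℂ))
      MeasureTheory.volume (-π) π := by
    intro s
    have hφ := continuous_phiFn (m := m) (r := r)
    exact Continuous.intervalIntegrable (by fun_prop) _ _
  simp only [hk, hexp, ← Complex.sub_re, ← mul_sub, ← intervalIntegral.integral_sub (hint t')
    (hint t), Complex.ofReal_sub]

lemma abs_hk_sub_hk_le (m : ℕ) (r : ℕ → ℝ) (t t' : ℝ) (x : ℤ) :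
    |hk m r t' x - hk m r t x| ≤
      ∫ θ in (-π)..π, |exp (-(t' * phiFn m r θ)) - exp (-(t * phiFn m r θ))| := by
  rw [hk_sub_hk]
  exact abs_re_fourier_integral_le x _

section weightedIntegral

variable {m : ℕ} {r : ℕ → ℝ} {t v : ℝ}

lemma continuous_phiFn_rpow_mul_exp (hv0 : 0 ≤ v) :
    Continuous fun θ => phiFn m r θ ^ v * exp (-(t * phiFn m r θ)) := by
  have hφ := continuous_phiFn (m := m) (r := r)
  exact (hφ.rpow_const fun _ => Or.inr hv0).mul (by fun_prop)

lemma abs_hk_sub_hk_le_rpow (hr : ∀ k ∈ Icc 1 m, 0 ≤ r k) {t' : ℝ} (htt' : t ≤ t')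
    (hv0 : 0 ≤ v) (hv1 : v ≤ 1) (x : ℤ) :
    |hk m r t' x - hk m r t x| ≤
      (t' - t) ^ v * ∫ θ in (-π)..π, phiFn m r θ ^ v * exp (-(t * phiFn m r θ)) := by
  have hφ := continuous_phiFn (m := m) (r := r)
  rw [← intervalIntegral.integral_const_mul]
  refine (abs_hk_sub_hk_le m r t t' x).trans <|
    intervalIntegral.integral_mono_on (by linarith [pi_pos])
      (Continuous.intervalIntegrable (by fun_prop) _ _)
      ((continuous_const.mul (continuous_phiFn_rpow_mul_exp hv0)).intervalIntegrable _ _)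
      fun θ _ => abs_exp_neg_mul_sub_le (phiFn_nonneg hr θ) htt' hv0 hv1

lemma integral_phiFn_rpow_mul_exp_le (hr : ∀ k ∈ Icc 1 m, 0 ≤ r k) (ht : 0 ≤ t)
    (hv0 : 0 ≤ v) (hv1 : v ≤ 1) :
    ∫ θ in (-π)..π, phiFn m r θ ^ v * exp (-(t * phiFn m r θ)) ≤
      2 * π * (1 + ∑ k ∈ Icc 1 m, 2 * r k) := by
  have hbound : ∀ θ, phiFn m r θ ^ v * exp (-(t * phiFn m r θ)) ≤
      1 + ∑ k ∈ Icc 1 m, 2 * r k := by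
    intro θ
    have hφ := phiFn_nonneg hr θ
    calc phiFn m r θ ^ v * exp (-(t * phiFn m r θ)) ≤ phiFn m r θ ^ v * 1 := by
          gcongr; exact exp_le_one_iff.2 (neg_nonpos.2 (mul_nonneg ht hφ))
      _ ≤ 1 + ∑ k ∈ Icc 1 m, 2 * r k := by
          linarith [rpow_le_one_add hφ hv0 hv1, phiFn_le hr θ]
  calc _ ≤ ∫ _ in (-π)..π, (1 + ∑ k ∈ Icc 1 m, 2 * r k) :=
        intervalIntegral.integral_mono_on (by linarith [pi_pos])
          ((continuous_phiFn_rpow_mul_exp hv0).intervalIntegrable _ _)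
          intervalIntegrable_const fun θ _ => hbound θ
    _ = 2 * π * (1 + ∑ k ∈ Icc 1 m, 2 * r k) := by
        rw [intervalIntegral.integral_const, smul_eq_mul]; ring

lemma integral_phiFn_rpow_mul_exp_le_of_pos (hm : 1 ≤ m) (hr : ∀ k ∈ Icc 1 m, 0 ≤ r k)
    (hr1 : 0 < r 1) (ht : 0 < t) (hv0 : 0 ≤ v) (hv1 : v ≤ 1) :
    ∫ θ in (-π)..π, phiFn m r θ ^ v * exp (-(t * phiFn m r θ)) ≤
      2 * √(π ^ 3 / r 1) * t ^ (-(1 / 2) - v) := by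
  have hb : 0 < r 1 * t / π ^ 2 := by positivity
  have hbound : ∀ θ ∈ Set.Icc (-π) π, phiFn m r θ ^ v * exp (-(t * phiFn m r θ)) ≤
      2 * t ^ (-v) * exp (-(r 1 * t / π ^ 2) * θ ^ 2) := by
    intro θ hθ
    have hq := mul_sq_le_phiFn hm hr (abs_le.2 hθ)
    refine (rpow_mul_exp_neg_mul_le (phiFn_nonneg hr θ) ht hv0 hv1).trans ?_
    gcongr 2 * t ^ (-v) * exp ?_
    have := mul_le_mul_of_nonneg_left hq (by positivity : (0 : ℝ) ≤ t / 2)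
    ring_nf at this ⊢
    linarith
  have hsqrt : √(π / (r 1 * t / π ^ 2)) = √(π ^ 3 / r 1) * t ^ (-(1 / 2) : ℝ) := by
    rw [show π / (r 1 * t / π ^ 2) = π ^ 3 / r 1 * t⁻¹ by field_simp,
      sqrt_mul (by positivity), sqrt_inv, sqrt_eq_rpow t, ← rpow_neg ht.le]
  calc _ ≤ ∫ θ in (-π)..π, 2 * t ^ (-v) * exp (-(r 1 * t / π ^ 2) * θ ^ 2) :=
        intervalIntegral.integral_mono_on (by linarith [pi_pos])
          ((continuous_phiFn_rpow_mul_exp hv0).intervalIntegrable _ _)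
          (Continuous.intervalIntegrable (by fun_prop) _ _) hbound
    _ ≤ 2 * t ^ (-v) * √(π / (r 1 * t / π ^ 2)) := by
        rw [intervalIntegral.integral_const_mul]
        gcongr
        exact integral_exp_neg_mul_sq_le hb
    _ = 2 * √(π ^ 3 / r 1) * t ^ (-(1 / 2) - v) := by
        rw [hsqrt, sub_eq_add_neg, rpow_add ht]; ring

end weightedIntegral

theorem stmt7 (m : ℕ) (hm : 1 ≤ m) (r : ℕ → ℝ) (hr : ∀ k ∈ Finset.Icc 1 m, 0 < r k) :
    ∃ C : ℝ, ∀ v ∈ Set.Icc (0:ℝ) 1, ∀ t t' : ℝ, 0 ≤ t → t < t' → ∀ x : ℤ,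
      |hk m r t' x - hk m r t x| ≤
        C * (if t = 0 then 1 else min 1 (t ^ (-(1/2 : ℝ) - v))) * (t' - t) ^ v := by
  have hr0 : ∀ k ∈ Icc 1 m, 0 ≤ r k := fun k hk => (hr k hk).le
  have hr1 : 0 < r 1 := hr 1 (mem_Icc.2 ⟨le_rfl, hm⟩)
  refine ⟨2 * π * (1 + ∑ k ∈ Icc 1 m, 2 * r k) + 2 * √(π ^ 3 / r 1), ?_⟩
  rintro v ⟨hv0, hv1⟩ t t' ht htt' x
  refine (abs_hk_sub_hk_le_rpow hr0 htt'.le hv0 hv1 x).trans ?_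
  rw [mul_comm _ ((t' - t) ^ v)]
  gcongr ?_ * ?_
  rcases le_or_gt t 1 with ht1 | ht1
  · have hweight : (if t = 0 then 1 else min 1 (t ^ (-(1/2 : ℝ) - v))) = 1 := by
      split_ifs with ht0
      · rfl
      · exact min_eq_left (one_le_rpow_of_pos_of_le_one_of_nonpos
          (lt_of_le_of_ne ht (Ne.symm ht0)) ht1 (by linarith))
    rw [hweight, mul_one]
    linarith [integral_phiFn_rpow_mul_exp_le hr0 ht hv0 hv1, sqrt_nonneg (π ^ 3 / r 1)]
  · have hweight : (if t = 0 then 1 else min 1 (t ^ (-(1/2 : ℝ) - v))) = t ^ (-(1/2) - v) := by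
      rw [if_neg (by linarith), min_eq_right (rpow_le_one_of_one_le_of_nonpos ht1.le
        (by linarith))]
    rw [hweight]
    have hC_nonneg : 0 ≤ 2 * π * (1 + ∑ k ∈ Icc 1 m, 2 * r k) :=
      mul_nonneg (by positivity)
        (by linarith [sum_nonneg fun k hk => mul_nonneg zero_le_two (hr0 k hk)])
    refine (integral_phiFn_rpow_mul_exp_le_of_pos hm hr0 hr1 (by linarith) hv0 hv1).trans ?_
    gcongr
    linarith
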